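/- arXiv:2002.05096 — 9 statements merged into one kernel-verified Lean document; each statement's English description precedes it below -/
import Mathlib

section
/- Let d be a positive integer and t ≥ 2 an integer. For any t points z_1, …, z_t in the closed Euclidean ball in ℝ^d centered at the origin with radius 1/2, there exist indices 1 ≤ i < j ≤ t such that ‖z_i − z_j‖ ≤ 1/(t^{1/d} − 1), where ‖·‖ is the Euclidean norm and t^{1/d} denotes the real power. -/
open MeasureTheory Metric
open scoped ENNReal

/-- **Packing argument.** Among `t ≥ 2` points in the closed Euclidean ball of radius `1/2`
centered at the origin in `ℝ^d`, there are two points at distance at most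
`1/(t^{1/d} - 1)`. -/
theorem min_dist_le_of_mem_ball
    (d : ℕ) (hd : 0 < d) (t : ℕ) (ht : 2 ≤ t)
    (z : ℕ → EuclideanSpace ℝ (Fin d))
    (hz : ∀ i, 1 ≤ i → i ≤ t →
      z i ∈ Metric.closedBall (0 : EuclideanSpace ℝ (Fin d)) (1 / 2)) :
    ∃ i j, 1 ≤ i ∧ i < j ∧ j ≤ t ∧
      ‖z i - z j‖ ≤ 1 / ((t : ℝ) ^ (1 / (d : ℝ)) - 1) := by
  by_contra hcon
  push_neg at hcon
  set c : ℝ := (t : ℝ) ^ (1 / (d : ℝ)) with hcdef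
  have hd' : (0:ℝ) < d := by exact_mod_cast hd
  have ht1 : (1:ℝ) < (t:ℝ) := by exact_mod_cast lt_of_lt_of_le one_lt_two ht
  have hc1 : 1 < c := by
    rw [hcdef]
    exact (Real.one_lt_rpow_iff (by linarith)).mpr (Or.inl ⟨ht1, by positivity⟩)
  set r : ℝ := 1 / (c - 1) with hrdef
  have hr0 : 0 < r := by rw [hrdef]; exact div_pos one_pos (by linarith)
  -- minimal pairwise distance
  set F : Finset (ℕ × ℕ) :=
    (Finset.Icc 1 t ×ˢ Finset.Icc 1 t).filter (fun p => p.1 < p.2) with hF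
  have hFne : F.Nonempty := ⟨(1, 2), by
    simp [hF, Finset.mem_filter, Finset.mem_Icc]
    omega⟩
  set s : ℝ := F.inf' hFne (fun p => ‖z p.1 - z p.2‖) with hs
  have hsr : r < s := by
    rw [hs, Finset.lt_inf'_iff]
    rintro ⟨i, j⟩ hp
    simp only [hF, Finset.mem_filter, Finset.mem_product, Finset.mem_Icc] at hp
    exact hcon i j hp.1.1.1 hp.2 hp.1.2.2
  have hs0 : 0 < s := hr0.trans hsr
  -- disjoint balls
  have hdisj : Set.PairwiseDisjoint (Finset.Icc 1 t : Set ℕ)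
      (fun i => ball (z i) (s / 2)) := by
    intro i hi j hj hij
    simp only [Finset.coe_Icc, Set.mem_Icc] at hi hj
    have hsij : s ≤ dist (z i) (z j) := by
      rcases hij.lt_or_gt with h | h
      · have hmem : (i, j) ∈ F := by
          simp only [hF, Finset.mem_filter, Finset.mem_product, Finset.mem_Icc]
          exact ⟨⟨⟨hi.1, hi.2⟩, ⟨hj.1, hj.2⟩⟩, h⟩
        have := Finset.inf'_le (fun p : ℕ × ℕ => ‖z p.1 - z p.2‖) hmem
        rw [dist_eq_norm]; exact this
      · have hmem : (j, i) ∈ F := by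
          simp only [hF, Finset.mem_filter, Finset.mem_product, Finset.mem_Icc]
          exact ⟨⟨⟨hj.1, hj.2⟩, ⟨hi.1, hi.2⟩⟩, h⟩
        have := Finset.inf'_le (fun p : ℕ × ℕ => ‖z p.1 - z p.2‖) hmem
        rw [dist_comm, dist_eq_norm]; exact this
    exact ball_disjoint_ball (by linarith)
  set μ := (volume : Measure (EuclideanSpace ℝ (Fin d))) with hμ
  have hUsub : (⋃ i ∈ Finset.Icc 1 t, ball (z i) (s / 2)) ⊆
      ball (0 : EuclideanSpace ℝ (Fin d)) ((1 + s) / 2) := by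
    intro x hx
    simp only [Set.mem_iUnion, exists_prop] at hx
    obtain ⟨i, hi, hx⟩ := hx
    rw [Finset.mem_Icc] at hi
    have hzi := hz i hi.1 hi.2
    rw [mem_closedBall] at hzi
    rw [mem_ball] at hx ⊢
    have htri := dist_triangle x (z i) 0
    linarith
  have hsum : ∑ i ∈ Finset.Icc 1 t, μ (ball (z i) (s / 2)) ≤
      μ (ball (0 : EuclideanSpace ℝ (Fin d)) ((1 + s) / 2)) := by
    rw [← measure_biUnion_finset hdisj (fun i _ => measurableSet_ball)]
    exact measure_mono hUsub
  have hB0 : 0 < μ (ball (0 : EuclideanSpace ℝ (Fin d)) 1) :=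
    measure_ball_pos μ _ one_pos
  have hBtop : μ (ball (0 : EuclideanSpace ℝ (Fin d)) 1) < ⊤ := measure_ball_lt_top
  haveI : Nonempty (Fin d) := Fin.pos_iff_nonempty.mp hd
  have hball : ∀ (x : EuclideanSpace ℝ (Fin d)) (ρ : ℝ), 0 ≤ ρ →
      μ (ball x ρ) = ENNReal.ofReal (ρ ^ d) * μ (ball (0 : EuclideanSpace ℝ (Fin d)) 1) := by
    intro x ρ hρ
    rw [hμ, Measure.addHaar_ball volume x hρ, finrank_euclideanSpace_fin]
  have hcard : (Finset.Icc 1 t).card = t := by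
    rw [Nat.card_Icc]; omega
  rw [Finset.sum_congr rfl (fun i _ => hball (z i) (s / 2) (by linarith)),
    Finset.sum_const, hcard, hball 0 ((1 + s) / 2) (by linarith), nsmul_eq_mul, ← mul_assoc] at hsum
  have hcancel : (t : ℝ≥0∞) * ENNReal.ofReal ((s / 2) ^ d) ≤
      ENNReal.ofReal (((1 + s) / 2) ^ d) :=
    (ENNReal.mul_le_mul_iff_left hB0.ne' hBtop.ne).mp hsum
  have key : (t : ℝ) * (s / 2) ^ d ≤ ((1 + s) / 2) ^ d := by
    have := hcancel
    rw [← ENNReal.ofReal_natCast, ← ENNReal.ofReal_mul (by positivity)] at this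
    exact (ENNReal.ofReal_le_ofReal_iff (by positivity)).mp this
  have h2 : (t : ℝ) ≤ ((1 + s) / s) ^ d := by
    have hpow : (0:ℝ) < (s / 2) ^ d := by positivity
    have hq : ((1 + s) / 2) ^ d / (s / 2) ^ d = ((1 + s) / s) ^ d := by
      rw [← div_pow]; congr 1; field_simp
    rw [← hq, le_div_iff₀ hpow]
    exact key
  have h3 : c ≤ (1 + s) / s := by
    have hb : (0:ℝ) ≤ (1 + s) / s := by positivity
    have h := Real.rpow_le_rpow (by positivity) h2
      (by positivity : (0:ℝ) ≤ 1 / (d : ℝ))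
    rw [← Real.rpow_natCast ((1 + s) / s) d, ← Real.rpow_mul hb,
      mul_one_div, div_self (ne_of_gt hd'), Real.rpow_one] at h
    exact h
  have h4 : s ≤ r := by
    rw [hrdef, le_div_iff₀ (by linarith : (0:ℝ) < c - 1)]
    have he : (1 + s) / s = 1 / s + 1 := by field_simp
    rw [he] at h3
    have h5 : c - 1 ≤ 1 / s := by linarith
    have h6 : s * (c - 1) ≤ s * (1 / s) := by
      exact mul_le_mul_of_nonneg_left h5 hs0.le
    rw [mul_one_div, div_self hs0.ne'] at h6
    exact h6
  linarith
end

section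
/- For every integer T ≥ 2 and all points z_1, …, z_T ∈ 𝔹, V_ν(z_1,…,z_T) ≤ Σ_{t=2}^T r_t^ν, i.e. Σ_{t=2}^T min_{1 ≤ i < t} ‖z_t − z_i‖^ν ≤ Σ_{t=2}^T (t^{1/d} − 1)^{−ν}. -/
open Metric

section aux

open MeasureTheory Module

variable {d : ℕ}

lemma packing_lemma (d : ℕ) (hd : 0 < d) (P : Finset (EuclideanSpace ℝ (Fin d))) (ε : ℝ)
    (hε : 0 < ε)
    (hP : ∀ p ∈ P, p ∈ closedBall (0 : EuclideanSpace ℝ (Fin d)) (1 / 2))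
    (hsep : ∀ p ∈ P, ∀ q ∈ P, p ≠ q → ε ≤ dist p q) :
    (P.card : ℝ) ^ (1 / (d : ℝ)) * ε ≤ 1 + ε := by
  haveI : Nonempty (Fin d) := ⟨⟨0, hd⟩⟩
  haveI : Nontrivial (EuclideanSpace ℝ (Fin d)) := inferInstance
  have hdim : finrank ℝ (EuclideanSpace ℝ (Fin d)) = d := finrank_euclideanSpace_fin
  
  let μ : MeasureTheory.Measure (EuclideanSpace ℝ (Fin d)) := MeasureTheory.volume
  have hB0 : μ (ball (0 : EuclideanSpace ℝ (Fin d)) 1) ≠ 0 := (measure_ball_pos μ 0 one_pos).ne'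
  have hBt : μ (ball (0 : EuclideanSpace ℝ (Fin d)) 1) ≠ ⊤ := measure_ball_lt_top.ne
  -- disjointness
  have hdisj : (P : Set (EuclideanSpace ℝ (Fin d))).PairwiseDisjoint (fun p => ball p (ε / 2)) := by
    intro p hp q hq hpq
    exact ball_disjoint_ball (by linarith [hsep p hp q hq hpq])
  have hsub : (⋃ p ∈ P, ball p (ε / 2)) ⊆ closedBall (0 : EuclideanSpace ℝ (Fin d)) ((1 + ε) / 2) := by
    intro x hx
    simp only [Set.mem_iUnion] at hx
    obtain ⟨p, hp, hxp⟩ := hx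
    have h1 : dist x p < ε / 2 := mem_ball.mp hxp
    have h2 : dist p 0 ≤ 1 / 2 := mem_closedBall.mp (hP p hp)
    have := dist_triangle x p 0
    exact mem_closedBall.mpr (by linarith)
  have hvol : (P.card : ENNReal) * (ENNReal.ofReal ((ε / 2) ^ d) * μ (ball 0 1))
      ≤ ENNReal.ofReal (((1 + ε) / 2) ^ d) * μ (ball 0 1) := by
    calc (P.card : ENNReal) * (ENNReal.ofReal ((ε / 2) ^ d) * μ (ball 0 1))
        = ∑ p ∈ P, μ (ball p (ε / 2)) := by
          rw [Finset.sum_congr rfl fun p _ => by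
            rw [Measure.addHaar_ball μ p (by positivity : (0:ℝ) ≤ ε / 2), hdim]]
          rw [Finset.sum_const, nsmul_eq_mul]
      _ = μ (⋃ p ∈ P, ball p (ε / 2)) :=
          (measure_biUnion_finset hdisj fun _ _ => measurableSet_ball).symm
      _ ≤ μ (closedBall (0 : EuclideanSpace ℝ (Fin d)) ((1 + ε) / 2)) := measure_mono hsub
      _ = ENNReal.ofReal (((1 + ε) / 2) ^ d) * μ (ball 0 1) := by
          rw [Measure.addHaar_closedBall μ _ (by positivity : (0:ℝ) ≤ (1 + ε) / 2), hdim]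
  rw [← mul_assoc, ENNReal.mul_le_mul_iff_left hB0 hBt, ← ENNReal.ofReal_natCast,
    ← ENNReal.ofReal_mul (by positivity),
    ENNReal.ofReal_le_ofReal_iff (by positivity)] at hvol
  -- real arithmetic
  have h2 : (P.card : ℝ) * ε ^ d ≤ (1 + ε) ^ d := by
    have h2d : (0 : ℝ) < 2 ^ d := by positivity
    rw [div_pow, div_pow, ← mul_div_assoc] at hvol
    exact (div_le_div_iff_of_pos_right h2d).mp hvol
  have h3 : ((P.card : ℝ) * ε ^ d) ^ (1 / (d : ℝ)) ≤ ((1 + ε) ^ d) ^ (1 / (d : ℝ)) :=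
    Real.rpow_le_rpow (by positivity) h2 (by positivity)
  have hd' : (d : ℝ) ≠ 0 := Nat.cast_ne_zero.mpr hd.ne'
  have hpow : ∀ x : ℝ, 0 ≤ x → ((x ^ d : ℝ)) ^ (1 / (d : ℝ)) = x := by
    intro x hx
    rw [← Real.rpow_natCast x d, ← Real.rpow_mul hx, mul_one_div_cancel hd', Real.rpow_one]
  rw [Real.mul_rpow (by positivity) (by positivity), hpow ε hε.le,
    hpow (1 + ε) (by positivity)] at h3
  exact h3

lemma one_lt_rpow_aux (d : ℕ) (hd : 0 < d) {k : ℝ} (hk : 2 ≤ k) :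
    (1 : ℝ) < k ^ (1 / (d : ℝ)) := by
  rw [Real.one_lt_rpow_iff_of_pos (by linarith)]
  exact Or.inl ⟨by linarith, by positivity⟩

lemma r_pos (d : ℕ) (hd : 0 < d) {k : ℝ} (hk : 2 ≤ k) :
    (0 : ℝ) < 1 / (k ^ (1 / (d : ℝ)) - 1) :=
  one_div_pos.mpr (by linarith [one_lt_rpow_aux d hd hk])

/-- abstract sorting lemma -/
lemma sum_rpow_le_aux (d : ℕ) (hd : 0 < d) (ν : ℝ) (hν : 0 < ν) :
    ∀ (n : ℕ) (s : Finset ℕ) (m : ℕ → ℝ), s.card = n →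
      (∀ t ∈ s, 0 ≤ m t) →
      (∀ S ⊆ s, ∀ t ∈ S, (∀ u ∈ S, m t ≤ m u) →
        m t ≤ 1 / (((S.card : ℝ) + 1) ^ (1 / (d : ℝ)) - 1)) →
      ∑ t ∈ s, m t ^ ν ≤ ∑ k ∈ Finset.Icc 2 (s.card + 1), (1 / ((k : ℝ) ^ (1 / (d : ℝ)) - 1)) ^ ν := by
  intro n
  induction n with
  | zero =>
    intro s m hcard _ _
    rw [Finset.card_eq_zero.mp hcard]
    simp
  | succ n ih =>
    intro s m hcard hnn H
    have hne : s.Nonempty := Finset.card_pos.mp (hcard ▸ n.succ_pos)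
    obtain ⟨t₀, ht₀, hmin⟩ := s.exists_min_image m hne
    have hcard' : (s.erase t₀).card = n := by
      rw [Finset.card_erase_of_mem ht₀, hcard]; rfl
    have hr_pos : (0:ℝ) < 1 / (((s.card : ℝ) + 1) ^ (1 / (d : ℝ)) - 1) :=
      r_pos d hd (by rw [hcard]; push_cast; linarith)
    have key : m t₀ ≤ 1 / (((s.card : ℝ) + 1) ^ (1 / (d : ℝ)) - 1) :=
      H s (subset_refl s) t₀ ht₀ hmin
    have h1 : m t₀ ^ ν ≤ (1 / (((s.card : ℝ) + 1) ^ (1 / (d : ℝ)) - 1)) ^ ν :=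
      Real.rpow_le_rpow (hnn t₀ ht₀) key hν.le
    have h2 := ih (s.erase t₀) m hcard' (fun t ht => hnn t (Finset.mem_of_mem_erase ht))
      (fun S hS t ht hm => H S (hS.trans (Finset.erase_subset _ _)) t ht hm)
    rw [hcard'] at h2
    have hsum : ∑ t ∈ s, m t ^ ν = m t₀ ^ ν + ∑ t ∈ s.erase t₀, m t ^ ν :=
      (Finset.add_sum_erase s _ ht₀).symm
    have hrsum : ∑ k ∈ Finset.Icc 2 (s.card + 1), (1 / ((k : ℝ) ^ (1 / (d : ℝ)) - 1)) ^ ν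
        = ∑ k ∈ Finset.Icc 2 (n + 1), (1 / ((k : ℝ) ^ (1 / (d : ℝ)) - 1)) ^ ν
          + (1 / (((n + 2 : ℕ) : ℝ) ^ (1 / (d : ℝ)) - 1)) ^ ν := by
      rw [hcard]
      exact Finset.sum_Icc_succ_top (by omega) _
    rw [hsum, hrsum]
    have : ((n + 2 : ℕ) : ℝ) = (s.card : ℝ) + 1 := by rw [hcard]; push_cast; ring
    rw [this]
    linarith

end aux

/-- `V d ν T z = Σ_{t=2}^T (min_{1 ≤ i < t} ‖z t - z i‖) ^ ν`, where `^` is the real power. -/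
noncomputable def V (d : ℕ) (ν : ℝ) (T : ℕ) (z : ℕ → EuclideanSpace ℝ (Fin d)) : ℝ :=
  ∑ t ∈ Finset.Icc 2 T, (sInf ((fun i => ‖z t - z i‖) '' Set.Ico 1 t)) ^ ν

/-- For points `z_1, …, z_T` in the ball of diameter 1,
`V_ν(z_1,…,z_T) ≤ Σ_{t=2}^T r_t^ν` with `r_t = 1/(t^{1/d} - 1)`. -/
theorem V_le_sum_r_pow
    (d : ℕ) (hd : 0 < d) (ν : ℝ) (hν : 0 < ν) (T : ℕ) (hT : 2 ≤ T)
    (z : ℕ → EuclideanSpace ℝ (Fin d))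
    (hz : ∀ i, 1 ≤ i → i ≤ T →
      z i ∈ closedBall (0 : EuclideanSpace ℝ (Fin d)) (1 / 2)) :
    V d ν T z ≤ ∑ t ∈ Finset.Icc 2 T, (1 / ((t : ℝ) ^ (1 / (d : ℝ)) - 1)) ^ ν := by
  classical
  set m : ℕ → ℝ := fun t => sInf ((fun i => ‖z t - z i‖) '' Set.Ico 1 t) with hm
  have hbdd : ∀ t : ℕ, BddBelow ((fun i => ‖z t - z i‖) '' Set.Ico 1 t) := by
    intro t
    exact ⟨0, by rintro x ⟨j, _, rfl⟩; exact norm_nonneg _⟩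
  have hnn : ∀ t, 0 ≤ m t := by
    intro t
    exact Real.sInf_nonneg (by rintro x ⟨j, _, rfl⟩; exact norm_nonneg _)
  have hle : ∀ t i, 1 ≤ i → i < t → m t ≤ ‖z t - z i‖ := by
    intro t i h1 h2
    exact csInf_le (hbdd t) ⟨i, ⟨h1, h2⟩, rfl⟩
  have H : ∀ S ⊆ Finset.Icc 2 T, ∀ t ∈ S, (∀ u ∈ S, m t ≤ m u) →
      m t ≤ 1 / (((S.card : ℝ) + 1) ^ (1 / (d : ℝ)) - 1) := by
    intro S hS t ht hminh
    have hSmem : ∀ u ∈ S, 2 ≤ u ∧ u ≤ T := by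
      intro u hu
      exact Finset.mem_Icc.mp (hS hu)
    have hScard : (2 : ℝ) ≤ (S.card : ℝ) + 1 := by
      have h1 : 1 ≤ S.card := Finset.card_pos.mpr ⟨t, ht⟩
      have h1' : (1 : ℝ) ≤ (S.card : ℝ) := Nat.one_le_cast.mpr h1
      linarith
    obtain h0 | h0 := (hnn t).eq_or_lt
    · rw [← h0]
      exact (r_pos d hd hScard).le
    · set ε := m t with hε
      have key : ∀ u ∈ insert 1 S, ∀ v ∈ insert 1 S, u < v → ε ≤ dist (z u) (z v) := by
        intro u hu v hv huv
        have hu1 : 1 ≤ u := by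
          rcases Finset.mem_insert.mp hu with h | h
          · omega
          · have := (hSmem u h).1; omega
        have hv' : v ∈ S := by
          rcases Finset.mem_insert.mp hv with h | h
          · omega
          · exact h
        calc ε ≤ m v := hminh v hv'
          _ ≤ ‖z v - z u‖ := hle v u hu1 huv
          _ = dist (z u) (z v) := by rw [dist_eq_norm, norm_sub_rev]
      have hinj : Set.InjOn z ↑(insert 1 S : Finset ℕ) := by
        intro u hu v hv heq
        by_contra hne
        rcases lt_or_gt_of_ne hne with h | h
        · have := key u (by exact_mod_cast hu) v (by exact_mod_cast hv) h
          rw [heq, dist_self] at this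
          linarith
        · have := key v (by exact_mod_cast hv) u (by exact_mod_cast hu) h
          rw [heq, dist_self] at this
          linarith
      have h1S : (1 : ℕ) ∉ S := fun h => by have := (hSmem 1 h).1; omega
      set P : Finset (EuclideanSpace ℝ (Fin d)) := (insert 1 S).image z with hP
      have hcard : P.card = S.card + 1 := by
        rw [hP, Finset.card_image_of_injOn hinj, Finset.card_insert_of_notMem h1S]
      have hmem : ∀ p ∈ P, p ∈ closedBall (0 : EuclideanSpace ℝ (Fin d)) (1 / 2) := by
        intro p hp
        obtain ⟨u, hu, rfl⟩ := Finset.mem_image.mp hp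
        rcases Finset.mem_insert.mp hu with h | h
        · exact h ▸ hz 1 le_rfl (by omega)
        · exact hz u (by have := (hSmem u h).1; omega) ((hSmem u h).2)
      have hsep : ∀ p ∈ P, ∀ q ∈ P, p ≠ q → ε ≤ dist p q := by
        intro p hp q hq hpq
        obtain ⟨u, hu, rfl⟩ := Finset.mem_image.mp hp
        obtain ⟨v, hv, rfl⟩ := Finset.mem_image.mp hq
        have hne : u ≠ v := fun h => hpq (by rw [h])
        rcases lt_or_gt_of_ne hne with h | h
        · exact key u hu v hv h
        · rw [dist_comm]
          exact key v hv u hu h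
      have hpack := packing_lemma d hd P ε h0 hmem hsep
      rw [hcard] at hpack
      push_cast at hpack
      have hgt : (1 : ℝ) < ((S.card : ℝ) + 1) ^ (1 / (d : ℝ)) := one_lt_rpow_aux d hd hScard
      rw [le_div_iff₀ (by linarith)]
      nlinarith
  have hc : (Finset.Icc 2 T).card = T - 1 := by rw [Nat.card_Icc]; omega
  have hmain := sum_rpow_le_aux d hd ν hν (T - 1) (Finset.Icc 2 T) m hc
    (fun t _ => hnn t) H
  rw [hc] at hmain
  have hT1 : T - 1 + 1 = T := by omega
  rw [hT1] at hmain
  exact hmain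
end

section
/- Let t ≥ 2 be an integer and let z_1, …, z_t ∈ 𝔹. Then there exists an index j with 2 ≤ j ≤ t such that, writing w_1, …, w_{t−1} for the sequence obtained from z_1, …, z_t by deleting the entry z_j (and keeping the order of the remaining entries), one has V_ν(z_1,…,z_t) ≤ V_ν(w_1,…,w_{t−1}) + r_t^ν. -/
/-!
If `t` points of the ball of diameter 1 in `ℝ^d` are pairwise at distance at least `m > 0`, the
balls of radius `m / 2` around them are disjoint and lie in the concentric ball of radius
`(1 + m) / 2`, so comparing Haar volumes gives `t^{1/d} ≤ (1 + m) / m`, i.e. `m ≤ r_t`. Hence some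
`z_j` lies within `r_t` of an earlier point, so its term in `V_ν` is at most `r_t^ν`. Deleting
`z_j` leaves the earlier terms unchanged, and each later term only grows, since its minimum is
then taken over fewer points.
-/

open Metric

open MeasureTheory Module Finset

section Packing

variable {ι E : Type*} [NormedAddCommGroup E] [NormedSpace ℝ E] [FiniteDimensional ℝ E]
  {s : Finset ι} {p : ι → E} {c : E} {R m : ℝ}

theorem card_mul_pow_le_of_pairwise_le_dist (hR : 0 ≤ R) (hm : 0 < m)
    (hp : ∀ i ∈ s, p i ∈ closedBall c R)
    (hsep : (s : Set ι).Pairwise fun i j => m ≤ dist (p i) (p j)) :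
    #s * (m / 2) ^ finrank ℝ E ≤ (R + m / 2) ^ finrank ℝ E := by
  borelize E
  set μ : Measure E := Measure.addHaar
  have hball : ∀ x (r : ℝ), 0 < r → μ.real (ball x r) = r ^ finrank ℝ E * μ.real (ball 0 1) :=
    fun x r hr => by
      rw [measureReal_def, Measure.addHaar_ball_of_pos μ x hr, ENNReal.toReal_mul,
        ENNReal.toReal_ofReal (by positivity), measureReal_def]
  have hdisj : (s : Set ι).PairwiseDisjoint fun i => ball (p i) (m / 2) :=
    hsep.mono' fun i j h => ball_disjoint_ball (by linarith)
  have hsub : (⋃ i ∈ s, ball (p i) (m / 2)) ⊆ ball c (R + m / 2) :=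
    Set.iUnion₂_subset fun i hi => ball_subset_ball' (by linarith [mem_closedBall.1 (hp i hi)])
  have hvol : #s * (m / 2) ^ finrank ℝ E * μ.real (ball 0 1)
      ≤ (R + m / 2) ^ finrank ℝ E * μ.real (ball 0 1) :=
    calc #s * (m / 2) ^ finrank ℝ E * μ.real (ball 0 1)
        = ∑ i ∈ s, μ.real (ball (p i) (m / 2)) := by
          simp [hball _ _ (half_pos hm), mul_assoc]
      _ = μ.real (⋃ i ∈ s, ball (p i) (m / 2)) :=
          (measureReal_biUnion_finset hdisj fun _ _ => measurableSet_ball).symm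
      _ ≤ μ.real (ball c (R + m / 2)) := measureReal_mono hsub
      _ = (R + m / 2) ^ finrank ℝ E * μ.real (ball 0 1) := hball c _ (by positivity)
  exact le_of_mul_le_mul_right hvol
    (ENNReal.toReal_pos (measure_ball_pos μ 0 one_pos).ne' measure_ball_lt_top.ne)

theorem le_div_of_pairwise_le_dist (hE : 0 < finrank ℝ E) (hs : 1 < #s) (hR : 0 ≤ R)
    (hm : 0 < m) (hp : ∀ i ∈ s, p i ∈ closedBall c R)
    (hsep : (s : Set ι).Pairwise fun i j => m ≤ dist (p i) (p j)) :
    m ≤ 2 * R / ((#s : ℝ) ^ (finrank ℝ E : ℝ)⁻¹ - 1) := by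
  set n := finrank ℝ E
  have hroot : (#s : ℝ) ^ (n : ℝ)⁻¹ * (m / 2) ≤ R + m / 2 := by
    have := Real.rpow_le_rpow (by positivity) (card_mul_pow_le_of_pairwise_le_dist hR hm hp hsep)
      (inv_nonneg.2 n.cast_nonneg)
    rwa [Real.mul_rpow (by positivity) (by positivity), Real.pow_rpow_inv_natCast (by positivity)
      hE.ne', Real.pow_rpow_inv_natCast (by positivity) hE.ne'] at this
  have hone : 1 < (#s : ℝ) ^ (n : ℝ)⁻¹ :=
    Real.one_lt_rpow (by exact_mod_cast hs) (by positivity)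
  rw [le_div_iff₀ (by linarith)]
  linarith

theorem exists_dist_le_of_one_lt_card (hE : 0 < finrank ℝ E) (hs : 1 < #s)
    (hp : ∀ i ∈ s, p i ∈ closedBall c R) :
    ∃ i ∈ s, ∃ j ∈ s, i ≠ j ∧
      dist (p i) (p j) ≤ 2 * R / ((#s : ℝ) ^ (finrank ℝ E : ℝ)⁻¹ - 1) := by
  obtain ⟨a, ha, b, hb, hab⟩ := Finset.one_lt_card.1 hs
  have hR : 0 ≤ R := dist_nonneg.trans (mem_closedBall.1 (hp a ha))
  obtain ⟨⟨i, j⟩, hij, hmin⟩ := s.offDiag.exists_min_image (fun q => dist (p q.1) (p q.2))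
    ⟨(a, b), Finset.mem_offDiag.2 ⟨ha, hb, hab⟩⟩
  obtain ⟨hi, hj, hne⟩ := Finset.mem_offDiag.1 hij
  refine ⟨i, hi, j, hj, hne, ?_⟩
  by_contra! hlt
  have hpos : 0 < dist (p i) (p j) := hlt.trans_le' <| div_nonneg (by positivity) <|
    sub_nonneg.2 (Real.one_le_rpow (by exact_mod_cast hs.le) (by positivity))
  exact hlt.not_ge <| le_div_of_pairwise_le_dist hE hs hR hpos hp
    fun k hk l hl hkl => hmin (k, l) (Finset.mem_offDiag.2 ⟨hk, hl, hkl⟩)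

end Packing

theorem sum_Icc_le_sum_Icc_pred_add {M : Type*} [AddCommMonoid M] [PartialOrder M]
    [IsOrderedAddMonoid M] {f g : ℕ → M} {j T : ℕ} (hj : 2 ≤ j) (hjT : j ≤ T)
    (hlt : ∀ s ∈ Ico 2 j, f s ≤ g s) (hgt : ∀ s ∈ Ioc j T, f s ≤ g (s - 1)) :
    ∑ s ∈ Icc 2 T, f s ≤ ∑ s ∈ Icc 2 (T - 1), g s + f j := by
  have hIoc : Ioc j T = Ico (j + 1) (T + 1) := by ext; simp
  have hf : ∑ s ∈ Icc 2 T, f s = ∑ s ∈ Ico 2 j, f s + (f j + ∑ s ∈ Ioc j T, f s) := by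
    rw [show Icc 2 T = Ico 2 (T + 1) by ext; simp, hIoc,
      ← sum_eq_sum_Ico_succ_bot (by omega), sum_Ico_consecutive f hj (by omega)]
  have hg : ∑ s ∈ Icc 2 (T - 1), g s = ∑ s ∈ Ico 2 j, g s + ∑ s ∈ Ioc j T, g (s - 1) := by
    rw [show Icc 2 (T - 1) = Ico 2 T by ext; simp; omega, hIoc,
      ← sum_Ico_add' (fun s => g (s - 1)) j T 1, ← sum_Ico_consecutive g hj hjT]
    simp only [Nat.add_sub_cancel]
  rw [hf, hg, add_left_comm, add_comm _ (f j)]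
  exact add_le_add le_rfl (add_le_add (sum_le_sum hlt) (sum_le_sum hgt))

section MinDistToPrev

variable {E : Type*} [SeminormedAddCommGroup E]

noncomputable def minDistToPrev (z : ℕ → E) (s : ℕ) : ℝ :=
  sInf ((fun i => ‖z s - z i‖) '' Set.Ico 1 s)

def deleteAt {α : Type*} (z : ℕ → α) (j : ℕ) : ℕ → α :=
  fun i => if i < j then z i else z (i + 1)

theorem minDistToPrev_nonneg (z : ℕ → E) (s : ℕ) : 0 ≤ minDistToPrev z s :=
  Real.sInf_nonneg <| Set.forall_mem_image.2 fun _ _ => norm_nonneg _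

theorem minDistToPrev_le (z : ℕ → E) {i s : ℕ} (hi : 1 ≤ i) (his : i < s) :
    minDistToPrev z s ≤ ‖z s - z i‖ :=
  csInf_le ((Set.finite_Ico 1 s).image _).bddBelow ⟨i, ⟨hi, his⟩, rfl⟩

theorem minDistToPrev_deleteAt_of_lt (z : ℕ → E) {j s : ℕ} (hs : s < j) :
    minDistToPrev (deleteAt z j) s = minDistToPrev z s := by
  refine congrArg sInf (Set.image_congr fun i hi => ?_)
  simp [deleteAt, hs, (Set.mem_Ico.1 hi).2.trans hs]

theorem minDistToPrev_le_minDistToPrev_deleteAt (z : ℕ → E) {j s : ℕ} (hj : j < s)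
    (hs : 2 < s) :
    minDistToPrev z s ≤ minDistToPrev (deleteAt z j) (s - 1) := by
  refine csInf_le_csInf ((Set.finite_Ico 1 s).image _).bddBelow
    ((Set.nonempty_Ico.2 (by omega)).image _) ?_
  rintro _ ⟨i, hi, rfl⟩
  rw [Set.mem_Ico] at hi
  have hlast : deleteAt z j (s - 1) = z s := by
    simp [deleteAt, show ¬s - 1 < j by omega, Nat.sub_add_cancel (by omega : 1 ≤ s)]
  by_cases hij : i < j
  · exact ⟨i, ⟨hi.1, by omega⟩, by rw [hlast]; simp [deleteAt, hij]⟩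
  · exact ⟨i + 1, ⟨by omega, by omega⟩, by rw [hlast]; simp [deleteAt, hij]⟩

end MinDistToPrev

theorem V_le_V_deleteAt_add {d : ℕ} {ν : ℝ} (hν : 0 ≤ ν) (z : ℕ → EuclideanSpace ℝ (Fin d))
    {j T : ℕ} (hj : 2 ≤ j) (hjT : j ≤ T) :
    V d ν T z ≤ V d ν (T - 1) (deleteAt z j) + minDistToPrev z j ^ ν :=
  sum_Icc_le_sum_Icc_pred_add (f := fun s => minDistToPrev z s ^ ν)
    (g := fun s => minDistToPrev (deleteAt z j) s ^ ν) hj hjT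
    (fun s hs => by rw [minDistToPrev_deleteAt_of_lt z (mem_Ico.1 hs).2])
    fun s hs => by
      obtain ⟨hjs, -⟩ := mem_Ioc.1 hs
      exact Real.rpow_le_rpow (minDistToPrev_nonneg z s)
        (minDistToPrev_le_minDistToPrev_deleteAt z hjs (by omega)) hν

/-- **Recursive step.** For `t ≥ 2` points `z_1, …, z_t` in the ball of diameter 1, one can
delete an entry `z_j` (for some `2 ≤ j ≤ t`) from the sequence so that, with
`w_1, …, w_{t-1}` the remaining entries in order,
`V_ν(z_1,…,z_t) ≤ V_ν(w_1,…,w_{t-1}) + r_t^ν`, where `r_t = 1/(t^{1/d} - 1)`. -/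
theorem V_le_V_erase_add
    (d : ℕ) (hd : 0 < d) (ν : ℝ) (hν : 0 < ν) (t : ℕ) (ht : 2 ≤ t)
    (z : ℕ → EuclideanSpace ℝ (Fin d))
    (hz : ∀ i, 1 ≤ i → i ≤ t →
      z i ∈ closedBall (0 : EuclideanSpace ℝ (Fin d)) (1 / 2)) :
    ∃ j, 2 ≤ j ∧ j ≤ t ∧
      V d ν t z ≤ V d ν (t - 1) (fun i => if i < j then z i else z (i + 1)) +
        (1 / ((t : ℝ) ^ (1 / (d : ℝ)) - 1)) ^ ν := by
  have hcard : #(Icc 1 t) = t := by simp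
  have hE : 0 < finrank ℝ (EuclideanSpace ℝ (Fin d)) := by simpa using hd
  obtain ⟨a, ha, b, hb, hab, hdist⟩ := exists_dist_le_of_one_lt_card (p := z) hE
    (by rw [hcard]; omega) fun i hi => hz i (mem_Icc.1 hi).1 (mem_Icc.1 hi).2
  rw [hcard, finrank_euclideanSpace_fin, mul_one_div_cancel two_ne_zero, ← one_div] at hdist
  obtain ⟨i, j, hij, hi, hjt, hclose⟩ : ∃ i j, i < j ∧ 1 ≤ i ∧ j ≤ t ∧
      ‖z j - z i‖ ≤ 1 / ((t : ℝ) ^ (1 / (d : ℝ)) - 1) := by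
    rw [mem_Icc] at ha hb
    rcases hab.lt_or_gt with h | h
    · exact ⟨a, b, h, ha.1, hb.2, by rwa [← dist_eq_norm, dist_comm]⟩
    · exact ⟨b, a, h, hb.1, ha.2, by rwa [← dist_eq_norm]⟩
  refine ⟨j, by omega, hjt, (V_le_V_deleteAt_add hν.le z (by omega) hjt).trans ?_⟩
  exact add_le_add le_rfl <| Real.rpow_le_rpow (minDistToPrev_nonneg z j)
    ((minDistToPrev_le z hi hij).trans hclose) hν.le
end

section
/- Suppose 0 < ν < d. Then there exists a constant C > 0, depending only on d and ν, such that for every integer T ≥ 2 and every sequence of points z_1, …, z_T ∈ 𝔹, V_ν(z_1,…,z_T) ≤ C · T^{(d−ν)/d}. -/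
open Metric

open MeasureTheory ENNReal in
lemma packing_card_bound (d : ℕ) (hd : 0 < d) (s : Finset ℕ)
    (z : ℕ → EuclideanSpace ℝ (Fin d))
    (hz : ∀ i ∈ s, z i ∈ closedBall (0 : EuclideanSpace ℝ (Fin d)) (1/2))
    {δ : ℝ} (hδ : 0 < δ) (hδ1 : δ ≤ 1)
    (hsep : ∀ i ∈ s, ∀ j ∈ s, i ≠ j → δ ≤ dist (z i) (z j)) :
    (s.card : ℝ) * (δ/2)^d ≤ 1 := by
  set μ : Measure (EuclideanSpace ℝ (Fin d)) := volume
  have hdisj : (↑s : Set ℕ).PairwiseDisjoint (fun i => ball (z i) (δ/2)) := by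
    intro i hi j hj hij
    exact ball_disjoint_ball (by linarith [hsep i (Finset.mem_coe.1 hi) j (Finset.mem_coe.1 hj) hij])
  have hsub : (⋃ i ∈ s, ball (z i) (δ/2)) ⊆ ball (0 : EuclideanSpace ℝ (Fin d)) ((1+δ)/2) := by
    intro y hy
    simp only [Set.mem_iUnion] at hy
    obtain ⟨i, hi, hyi⟩ := hy
    have h1 : dist y (z i) < δ/2 := mem_ball.1 hyi
    have h2 : dist (z i) 0 ≤ 1/2 := mem_closedBall.1 (hz i hi)
    have := dist_triangle y (z i) 0
    exact mem_ball.2 (by linarith)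
  have hball : ∀ i : ℕ, μ (ball (z i) (δ/2)) =
      ENNReal.ofReal ((δ/2)^d) * μ (ball (0 : EuclideanSpace ℝ (Fin d)) 1) := by
    intro i
    rw [Measure.addHaar_ball_of_pos μ (z i) (by linarith : (0:ℝ) < δ/2)]
    congr 2
    rw [finrank_euclideanSpace_fin]
  have hbig : μ (ball (0 : EuclideanSpace ℝ (Fin d)) ((1+δ)/2)) =
      ENNReal.ofReal (((1+δ)/2)^d) * μ (ball (0 : EuclideanSpace ℝ (Fin d)) 1) := by
    rw [Measure.addHaar_ball_of_pos μ 0 (by linarith : (0:ℝ) < (1+δ)/2)]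
    congr 2
    rw [finrank_euclideanSpace_fin]
  have hmeas : μ (⋃ i ∈ s, ball (z i) (δ/2)) = ∑ i ∈ s, μ (ball (z i) (δ/2)) :=
    measure_biUnion_finset hdisj (fun i _ => measurableSet_ball)
  have hle : (s.card : ℝ≥0∞) * (ENNReal.ofReal ((δ/2)^d) * μ (ball (0 : EuclideanSpace ℝ (Fin d)) 1)) ≤
      ENNReal.ofReal (((1+δ)/2)^d) * μ (ball (0 : EuclideanSpace ℝ (Fin d)) 1) := by
    calc (s.card : ℝ≥0∞) * (ENNReal.ofReal ((δ/2)^d) * μ (ball (0 : EuclideanSpace ℝ (Fin d)) 1))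
        = ∑ i ∈ s, μ (ball (z i) (δ/2)) := by
          rw [Finset.sum_congr rfl (fun i _ => hball i), Finset.sum_const, nsmul_eq_mul]
      _ = μ (⋃ i ∈ s, ball (z i) (δ/2)) := hmeas.symm
      _ ≤ μ (ball (0 : EuclideanSpace ℝ (Fin d)) ((1+δ)/2)) := measure_mono hsub
      _ = _ := hbig
  have hB0 : μ (ball (0 : EuclideanSpace ℝ (Fin d)) 1) ≠ 0 := (measure_ball_pos μ 0 one_pos).ne'
  have hBtop : μ (ball (0 : EuclideanSpace ℝ (Fin d)) 1) ≠ ⊤ := measure_ball_lt_top.ne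
  rw [← mul_assoc] at hle
  have hle2 : (s.card : ℝ≥0∞) * ENNReal.ofReal ((δ/2)^d) ≤ ENNReal.ofReal (((1+δ)/2)^d) :=
    (ENNReal.mul_le_mul_iff_left hB0 hBtop).1 hle
  have hre : (s.card : ℝ) * (δ/2)^d ≤ ((1+δ)/2)^d := by
    have : ENNReal.ofReal ((s.card : ℝ) * (δ/2)^d) ≤ ENNReal.ofReal (((1+δ)/2)^d) := by
      rw [ENNReal.ofReal_mul (by positivity)]
      rwa [ENNReal.ofReal_natCast]
    exact (ENNReal.ofReal_le_ofReal_iff (by positivity)).1 this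
  calc (s.card : ℝ) * (δ/2)^d ≤ ((1+δ)/2)^d := hre
    _ ≤ 1 := pow_le_one₀ (by linarith) (by linarith)

lemma sep_le_rpow (d : ℕ) (hd : 0 < d) (s : Finset ℕ)
    (z : ℕ → EuclideanSpace ℝ (Fin d))
    (hz : ∀ i ∈ s, z i ∈ closedBall (0 : EuclideanSpace ℝ (Fin d)) (1/2))
    {δ : ℝ} (hδ0 : 0 ≤ δ) (hδ1 : δ ≤ 1) (hs : s.Nonempty)
    (hsep : ∀ i ∈ s, ∀ j ∈ s, i ≠ j → δ ≤ dist (z i) (z j)) :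
    δ ≤ 2 * (s.card : ℝ) ^ (-(1:ℝ)/(d:ℝ)) := by
  have hcard : (1:ℝ) ≤ (s.card : ℝ) := by exact_mod_cast hs.card_pos
  have hd' : (0:ℝ) < d := by exact_mod_cast hd
  rcases eq_or_lt_of_le hδ0 with h0|h0
  · have : (0:ℝ) < (s.card:ℝ) ^ (-(1:ℝ)/(d:ℝ)) := Real.rpow_pos_of_pos (by linarith) _
    linarith
  have hpack := packing_card_bound d hd s z hz h0 hδ1 hsep
  have h1 : (δ/2)^d ≤ ((s.card:ℝ))⁻¹ := by
    rw [← one_div, le_div_iff₀ (by linarith : (0:ℝ) < (s.card:ℝ))]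
    linarith [hpack, mul_comm ((δ/2)^d) ((s.card:ℝ))]
  have hx : δ/2 ≤ ((s.card:ℝ))⁻¹ ^ ((d:ℝ)⁻¹) := by
    calc δ/2 = ((δ/2)^d : ℝ) ^ ((d:ℝ)⁻¹) := by
          rw [← Real.rpow_natCast (δ/2) d, ← Real.rpow_mul (by linarith),
            mul_inv_cancel₀ hd'.ne', Real.rpow_one]
      _ ≤ ((s.card:ℝ))⁻¹ ^ ((d:ℝ)⁻¹) := Real.rpow_le_rpow (by positivity) h1 (by positivity)
  have heq : ((s.card:ℝ))⁻¹ ^ ((d:ℝ)⁻¹) = (s.card:ℝ) ^ (-(1:ℝ)/(d:ℝ)) := by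
    rw [← Real.rpow_neg_one (s.card:ℝ), ← Real.rpow_mul (by linarith)]
    congr 1
  rw [heq] at hx
  linarith

lemma sum_rpow_neg_le (M : ℕ) (hM : 1 ≤ M) {a : ℝ} (ha0 : 0 < a) (ha1 : a < 1) :
    ∑ j ∈ Finset.Icc 1 M, (j:ℝ) ^ (-a) ≤ 1 + (M:ℝ)^(1-a) / (1-a) := by
  have hM' : (1:ℝ) ≤ (M:ℝ) := by exact_mod_cast hM
  have hanti : AntitoneOn (fun x : ℝ => x ^ (-a)) (Set.Icc (((1:ℕ)):ℝ) (M:ℝ)) := by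
    intro x hx y hy hxy
    have hx0 : (0:ℝ) < x := lt_of_lt_of_le (by norm_num) hx.1
    exact Real.rpow_le_rpow_of_nonpos hx0 hxy (by linarith)
  have hint := AntitoneOn.sum_le_integral_Ico hM hanti
  have hIcc : ∫ x in ((1:ℕ):ℝ)..((M:ℕ):ℝ), x ^ (-a) = ((M:ℝ)^(-a+1) - 1)/(-a+1) := by
    rw [integral_rpow (Or.inl (by linarith : (-1:ℝ) < -a))]
    norm_num
  have hmap : ∑ i ∈ Finset.Ico 1 M, (((i+1:ℕ)):ℝ) ^ (-a) = ∑ j ∈ Finset.Icc 2 M, (j:ℝ)^(-a) := by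
    have he : Finset.Icc 2 M = (Finset.Ico 1 M).map (addRightEmbedding 1) := by
      rw [Finset.map_add_right_Ico, Finset.Ico_add_one_right_eq_Icc]
    rw [he, Finset.sum_map]
    simp [addRightEmbedding]
  have hsplit : ∑ j ∈ Finset.Icc 1 M, (j:ℝ)^(-a) = 1 + ∑ j ∈ Finset.Icc 2 M, (j:ℝ)^(-a) := by
    rw [Finset.Icc_eq_cons_Ioc hM, Finset.sum_cons, ← Finset.Icc_add_one_left_eq_Ioc]
    norm_num [Real.one_rpow]
  rw [hsplit]
  have hb : (0:ℝ) < 1 - a := by linarith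
  have : ∑ j ∈ Finset.Icc 2 M, (j:ℝ)^(-a) ≤ ((M:ℝ)^(1-a) - 1)/(1-a) := by
    have := hint
    rw [hIcc, hmap] at this
    have he : (-a+1) = 1 - a := by ring
    rw [he] at this
    exact this
  have hnn : (0:ℝ) ≤ (M:ℝ)^(1-a) := Real.rpow_nonneg (by positivity) _
  have : ((M:ℝ)^(1-a) - 1)/(1-a) ≤ (M:ℝ)^(1-a)/(1-a) := by
    gcongr
    linarith
  linarith [this, ‹∑ j ∈ Finset.Icc 2 M, (j:ℝ)^(-a) ≤ ((M:ℝ)^(1-a) - 1)/(1-a)›]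

/-- **Case `d > ν` of Lemma 4.** If `0 < ν < d`, there is a constant `C > 0` depending only
on `d` and `ν` such that for every `T ≥ 2` and points `z_1, …, z_T` in the ball of
diameter 1, `V_ν(z_1,…,z_T) ≤ C · T^((d-ν)/d)`. -/
theorem V_le_of_nu_lt_d
    (d : ℕ) (hd : 0 < d) (ν : ℝ) (hν : 0 < ν) (hνd : ν < d) :
    ∃ C : ℝ, 0 < C ∧ ∀ T : ℕ, 2 ≤ T → ∀ z : ℕ → EuclideanSpace ℝ (Fin d),
      (∀ i, 1 ≤ i → i ≤ T →
        z i ∈ closedBall (0 : EuclideanSpace ℝ (Fin d)) (1 / 2)) →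
      V d ν T z ≤ C * (T : ℝ) ^ (((d : ℝ) - ν) / (d : ℝ)) := by
  have hd' : (0:ℝ) < d := by exact_mod_cast hd
  set a : ℝ := ν / d with ha
  have ha0 : 0 < a := by positivity
  have ha1 : a < 1 := by rw [ha, div_lt_one hd']; exact hνd
  set b : ℝ := 1 - a with hb
  have hb0 : 0 < b := by linarith
  refine ⟨(2:ℝ)^ν * (1 + 1/b), by positivity, ?_⟩
  intro T hT z hz
  have hbd : ((d:ℝ) - ν)/d = b := by
    rw [hb, ha]; field_simp
  rw [hbd]
  set r : ℕ → ℝ := fun t => sInf ((fun i => ‖z t - z i‖) '' Set.Ico 1 t) with hr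
  set S := Finset.Icc 2 T with hS
  have hmemS : ∀ t ∈ S, 2 ≤ t ∧ t ≤ T := fun t ht => by
    simpa [hS, Finset.mem_Icc] using ht
  have hbdd : ∀ t, BddBelow ((fun i => ‖z t - z i‖) '' Set.Ico 1 t) := by
    intro t
    refine ⟨0, ?_⟩
    rintro x ⟨i, _, rfl⟩
    exact norm_nonneg _
  have hrle : ∀ t, 2 ≤ t → ∀ i, 1 ≤ i → i < t → r t ≤ ‖z t - z i‖ := by
    intro t ht i hi1 hit
    exact csInf_le (hbdd t) ⟨i, ⟨hi1, hit⟩, rfl⟩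
  have hr0 : ∀ t, 0 ≤ r t := by
    intro t
    apply Real.sInf_nonneg
    rintro x ⟨i, _, rfl⟩
    exact norm_nonneg _
  have hr1 : ∀ t ∈ S, r t ≤ 1 := by
    intro t ht
    obtain ⟨ht2, htT⟩ := hmemS t ht
    have h1 : r t ≤ ‖z t - z 1‖ := hrle t ht2 1 le_rfl (by omega)
    have h2 : ‖z t‖ ≤ 1/2 := by
      have := hz t (by omega) htT
      rwa [mem_closedBall_zero_iff] at this
    have h3 : ‖z 1‖ ≤ 1/2 := by
      have := hz 1 le_rfl (by omega)
      rwa [mem_closedBall_zero_iff] at this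
    calc r t ≤ ‖z t - z 1‖ := h1
      _ ≤ ‖z t‖ + ‖z 1‖ := norm_sub_le _ _
      _ ≤ 1 := by linarith
  set A : ℕ → Finset ℕ := fun t => S.filter (fun s => r t < r s ∨ (r s = r t ∧ s ≤ t)) with hA
  have hmemA : ∀ t ∈ S, t ∈ A t := by
    intro t ht
    exact Finset.mem_filter.2 ⟨ht, Or.inr ⟨rfl, le_rfl⟩⟩
  have hsepA : ∀ t ∈ S, ∀ i ∈ A t, ∀ j ∈ A t, i ≠ j → r t ≤ dist (z i) (z j) := by
    intro t ht
    have key : ∀ i ∈ A t, ∀ j ∈ A t, i < j → r t ≤ dist (z i) (z j) := by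
      intro i hi j hj hij
      have hiS : i ∈ S := (Finset.mem_filter.1 hi).1
      have hjS : j ∈ S := (Finset.mem_filter.1 hj).1
      have hrtj : r t ≤ r j := by
        rcases (Finset.mem_filter.1 hj).2 with h|h
        · linarith
        · linarith [h.1.ge]
      have hi2 : 2 ≤ i := (hmemS i hiS).1
      have h1 : r j ≤ ‖z j - z i‖ := hrle j (hmemS j hjS).1 i (by omega) hij
      rw [dist_comm, dist_eq_norm]
      linarith
    intro i hi j hj hne
    rcases lt_or_gt_of_ne hne with h|h
    · exact key i hi j hj h
    · rw [dist_comm]; exact key j hj i hi h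
  have hrank : ∀ t ∈ S, r t ≤ 2 * (((A t).card : ℝ)) ^ (-(1:ℝ)/(d:ℝ)) := by
    intro t ht
    apply sep_le_rpow d hd (A t) z ?_ (hr0 t) (hr1 t ht) ⟨t, hmemA t ht⟩ (hsepA t ht)
    intro i hi
    have hiS : i ∈ S := (Finset.mem_filter.1 hi).1
    obtain ⟨h2, hT'⟩ := hmemS i hiS
    exact hz i (by omega) hT'
  have hmono : ∀ t1 ∈ S, ∀ t2 ∈ S, (r t2 < r t1 ∨ (r t1 = r t2 ∧ t1 < t2)) →
      (A t1).card < (A t2).card := by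
    intro t1 h1 t2 h2 hlt
    apply Finset.card_lt_card
    have hsub : A t1 ⊆ A t2 := by
      intro s hs
      rcases Finset.mem_filter.1 hs with ⟨hsS, hcond⟩
      refine Finset.mem_filter.2 ⟨hsS, ?_⟩
      rcases hlt with h|⟨heq, hlt'⟩
      · left
        rcases hcond with h'|⟨h', _⟩
        · linarith
        · linarith [h'.ge]
      · rcases hcond with h'|⟨h', hle⟩
        · left; linarith [heq.ge]
        · right; exact ⟨h'.trans heq, hle.trans hlt'.le⟩
    rw [Finset.ssubset_iff_of_subset hsub]
    refine ⟨t2, hmemA t2 h2, ?_⟩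
    intro hmem
    rcases (Finset.mem_filter.1 hmem).2 with h|⟨heq, hle⟩
    · rcases hlt with h'|⟨h', _⟩
      · linarith
      · linarith [h'.le]
    · rcases hlt with h'|⟨h', hlt'⟩
      · linarith [heq.le]
      · omega
  have hinj : ∀ t1 ∈ S, ∀ t2 ∈ S, (A t1).card = (A t2).card → t1 = t2 := by
    intro t1 h1 t2 h2 heq
    by_contra hne
    rcases lt_trichotomy (r t1) (r t2) with h|h|h
    · have := hmono t2 h2 t1 h1 (Or.inl h); omega
    · rcases lt_or_gt_of_ne hne with hlt|hgt
      · have := hmono t1 h1 t2 h2 (Or.inr ⟨h, hlt⟩); omega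
      · have := hmono t2 h2 t1 h1 (Or.inr ⟨h.symm, hgt⟩); omega
    · have := hmono t1 h1 t2 h2 (Or.inl h); omega
  have hcardS : S.card = T - 1 := by
    rw [hS, Nat.card_Icc]
    omega
  have hN1 : ∀ t ∈ S, 1 ≤ (A t).card := fun t ht => Finset.card_pos.2 ⟨t, hmemA t ht⟩
  have hNle : ∀ t ∈ S, (A t).card ≤ T - 1 := by
    intro t ht
    rw [← hcardS]
    exact Finset.card_le_card (Finset.filter_subset _ _)
  have hterm : ∀ t ∈ S, (r t)^ν ≤ (2:ℝ)^ν * (((A t).card:ℝ))^(-a) := by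
    intro t ht
    have hNpos : (0:ℝ) < ((A t).card:ℝ) := by exact_mod_cast hN1 t ht
    have h1 : (r t)^ν ≤ (2 * ((A t).card:ℝ)^(-(1:ℝ)/(d:ℝ)))^ν :=
      Real.rpow_le_rpow (hr0 t) (hrank t ht) hν.le
    have h2 : (2 * ((A t).card:ℝ)^(-(1:ℝ)/(d:ℝ)))^ν
        = (2:ℝ)^ν * (((A t).card:ℝ))^(-a) := by
      rw [Real.mul_rpow (by norm_num) (Real.rpow_nonneg hNpos.le _),
        ← Real.rpow_mul hNpos.le]
      congr 1
      rw [ha]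
      field_simp
    rw [h2] at h1
    exact h1
  have hVle : V d ν T z ≤ ∑ t ∈ S, (2:ℝ)^ν * (((A t).card:ℝ))^(-a) :=
    Finset.sum_le_sum hterm
  have himg : ∑ t ∈ S, (((A t).card:ℝ))^(-a) ≤ ∑ j ∈ Finset.Icc 1 (T-1), (j:ℝ)^(-a) := by
    rw [← Finset.sum_image (g := fun t => (A t).card) (f := fun j : ℕ => (j:ℝ)^(-a)) hinj]
    apply Finset.sum_le_sum_of_subset_of_nonneg
    · intro j hj
      obtain ⟨t, ht, rfl⟩ := Finset.mem_image.1 hj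
      exact Finset.mem_Icc.2 ⟨hN1 t ht, hNle t ht⟩
    · intro j _ _
      positivity
  have hsum := sum_rpow_neg_le (T-1) (by omega) ha0 ha1
  have hTb1 : (1:ℝ) ≤ (T:ℝ)^b := by
    calc (1:ℝ) = (1:ℝ)^b := (Real.one_rpow _).symm
      _ ≤ (T:ℝ)^b := Real.rpow_le_rpow (by norm_num) (by exact_mod_cast le_trans (by norm_num) hT) hb0.le
  have hT1b : ((T-1:ℕ):ℝ)^b ≤ (T:ℝ)^b := by
    apply Real.rpow_le_rpow (by positivity) ?_ hb0.le
    exact_mod_cast Nat.sub_le T 1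
  calc V d ν T z ≤ ∑ t ∈ S, (2:ℝ)^ν * (((A t).card:ℝ))^(-a) := hVle
    _ = (2:ℝ)^ν * ∑ t ∈ S, (((A t).card:ℝ))^(-a) := by rw [Finset.mul_sum]
    _ ≤ (2:ℝ)^ν * ∑ j ∈ Finset.Icc 1 (T-1), (j:ℝ)^(-a) :=
        mul_le_mul_of_nonneg_left himg (by positivity)
    _ ≤ (2:ℝ)^ν * (1 + ((T-1:ℕ):ℝ)^(1-a) / (1-a)) :=
        mul_le_mul_of_nonneg_left hsum (by positivity)
    _ ≤ (2:ℝ)^ν * (1 + 1/b) * (T:ℝ)^b := by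
        rw [← hb]
        have h1 : ((T-1:ℕ):ℝ)^b / b ≤ (T:ℝ)^b / b := by
          gcongr
        have h2 : (1:ℝ) + ((T-1:ℕ):ℝ)^b / b ≤ (T:ℝ)^b + (T:ℝ)^b/b := by linarith
        have h3 := mul_le_mul_of_nonneg_left h2 (le_of_lt (Real.rpow_pos_of_pos two_pos ν))
        calc (2:ℝ)^ν * (1 + ((T-1:ℕ):ℝ)^b / b) ≤ (2:ℝ)^ν * ((T:ℝ)^b + (T:ℝ)^b/b) := h3
          _ = (2:ℝ)^ν * (1 + 1/b) * (T:ℝ)^b := by field_simp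
end

section
/- Suppose ν = d. Then there exists a constant C > 0, depending only on d, such that for every integer T ≥ 2 and every sequence of points z_1, …, z_T ∈ 𝔹, V_d(z_1,…,z_T) ≤ C · log T. -/
open Metric MeasureTheory Finset
open scoped ENNReal

lemma packing_bound (d : ℕ) (hd : 0 < d) {ε : ℝ} (hε : 0 < ε) (hε1 : ε ≤ 1)
    (F : Finset ℕ) (z : ℕ → EuclideanSpace ℝ (Fin d))
    (hz : ∀ t ∈ F, z t ∈ closedBall (0 : EuclideanSpace ℝ (Fin d)) (1/2))
    (hsep : ∀ s ∈ F, ∀ t ∈ F, s ≠ t → ε ≤ ‖z s - z t‖) :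
    (F.card : ℝ) ≤ (2 / ε) ^ d := by
  have hdim : Module.finrank ℝ (EuclideanSpace ℝ (Fin d)) = d := by simp
  have hnt : Nontrivial (EuclideanSpace ℝ (Fin d)) :=
    Module.nontrivial_of_finrank_pos (R := ℝ)
      (by omega : 0 < Module.finrank ℝ (EuclideanSpace ℝ (Fin d)))
  set B : ℝ≥0∞ := volume (ball (0 : EuclideanSpace ℝ (Fin d)) 1) with hB
  have hB0 : B ≠ 0 := (measure_ball_pos volume _ one_pos).ne'
  have hBtop : B ≠ ⊤ := measure_ball_lt_top.ne
  have hdisj : (F : Set ℕ).PairwiseDisjoint (fun t => ball (z t) (ε / 2)) := by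
    intro s hs t ht hst
    apply Set.disjoint_left.2
    intro y hys hyt
    have h1 : dist y (z s) < ε / 2 := mem_ball.1 hys
    have h2 : dist y (z t) < ε / 2 := mem_ball.1 hyt
    have h3 : ε ≤ dist (z s) (z t) := by rw [dist_eq_norm]; exact hsep s hs t ht hst
    have h4 := dist_triangle (z s) y (z t)
    rw [dist_comm (z s) y] at h4
    linarith
  have hmeas : volume (⋃ t ∈ F, ball (z t) (ε / 2))
      = F.card * (ENNReal.ofReal ((ε/2) ^ d) * B) := by
    rw [measure_biUnion_finset hdisj (fun t _ => measurableSet_ball)]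
    rw [Finset.sum_congr rfl (fun t _ => by
      rw [Measure.addHaar_ball (volume : Measure (EuclideanSpace ℝ (Fin d))) (z t)
        (by positivity : (0:ℝ) ≤ ε/2), hdim])]
    rw [Finset.sum_const, nsmul_eq_mul]
  have hsub : (⋃ t ∈ F, ball (z t) (ε / 2)) ⊆ ball (0 : EuclideanSpace ℝ (Fin d)) 1 := by
    intro y hy
    simp only [Set.mem_iUnion] at hy
    obtain ⟨t, ht, hyt⟩ := hy
    have h1 : dist y (z t) < ε / 2 := mem_ball.1 hyt
    have h2 : dist (z t) 0 ≤ 1/2 := mem_closedBall.1 (hz t ht)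
    have h3 := dist_triangle y (z t) 0
    rw [mem_ball]
    linarith
  have hle : (F.card : ℝ≥0∞) * (ENNReal.ofReal ((ε/2) ^ d) * B) ≤ 1 * B := by
    rw [one_mul, ← hmeas]; exact measure_mono hsub
  rw [← mul_assoc] at hle
  have h2 : (F.card : ℝ≥0∞) * ENNReal.ofReal ((ε/2) ^ d) ≤ 1 :=
    (ENNReal.mul_le_mul_iff_left hB0 hBtop).1 hle
  have hc0 : (0:ℝ) < (ε/2) ^ d := by positivity
  have h3 : (F.card : ℝ≥0∞) ≤ (ENNReal.ofReal ((ε/2) ^ d))⁻¹ :=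
    ENNReal.le_inv_iff_mul_le.2 h2
  rw [← ENNReal.ofReal_inv_of_pos hc0] at h3
  have h4 : ((ε/2) ^ d)⁻¹ = (2/ε) ^ d := by rw [← inv_pow, inv_div]
  rw [h4, ← ENNReal.ofReal_natCast] at h3
  exact (ENNReal.ofReal_le_ofReal_iff (by positivity)).1 h3

lemma sum_inv_rank_le (f : ℕ → ℝ) : ∀ (n : ℕ) (S : Finset ℕ), S.card = n →
    ∑ t ∈ S, (((S.filter (fun s => f t ≤ f s)).card : ℝ))⁻¹
      ≤ ∑ k ∈ Finset.range n, ((k : ℝ) + 1)⁻¹ := by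
  intro n
  induction n with
  | zero => intro S hS; rw [Finset.card_eq_zero.1 hS]; simp
  | succ n ih =>
    intro S hS
    have hne : S.Nonempty := Finset.card_pos.1 (by omega)
    obtain ⟨t0, ht0, hmin⟩ := S.exists_min_image f hne
    have hterm : (S.filter (fun s => f t0 ≤ f s)) = S := by
      apply Finset.filter_true_of_mem
      intro s hs; exact hmin s hs
    have hsplit : ∑ t ∈ S, (((S.filter (fun s => f t ≤ f s)).card : ℝ))⁻¹
        = (((S.filter (fun s => f t0 ≤ f s)).card : ℝ))⁻¹
          + ∑ t ∈ S.erase t0, (((S.filter (fun s => f t ≤ f s)).card : ℝ))⁻¹ :=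
      (Finset.add_sum_erase _ _ ht0).symm
    rw [hsplit, hterm, hS, Finset.sum_range_succ]
    rw [add_comm (∑ k ∈ Finset.range n, ((k:ℝ)+1)⁻¹) _]
    have hcard : (S.erase t0).card = n := by
      rw [Finset.card_erase_of_mem ht0, hS]; omega
    refine add_le_add (le_of_eq (by push_cast; ring)) ?_
    calc ∑ t ∈ S.erase t0, (((S.filter (fun s => f t ≤ f s)).card : ℝ))⁻¹
        ≤ ∑ t ∈ S.erase t0, ((((S.erase t0).filter (fun s => f t ≤ f s)).card : ℝ))⁻¹ := by
          apply Finset.sum_le_sum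
          intro t ht
          have hpos : 0 < ((S.erase t0).filter (fun s => f t ≤ f s)).card :=
            Finset.card_pos.2 ⟨t, Finset.mem_filter.2 ⟨ht, le_refl _⟩⟩
          have hsubset : ((S.erase t0).filter (fun s => f t ≤ f s))
              ⊆ (S.filter (fun s => f t ≤ f s)) :=
            Finset.filter_subset_filter _ (Finset.erase_subset _ _)
          have := Finset.card_le_card hsubset
          exact inv_anti₀ (by exact_mod_cast hpos) (by exact_mod_cast this)
      _ ≤ ∑ k ∈ Finset.range n, ((k:ℝ)+1)⁻¹ := ih _ hcard

/-- **Case `d = ν` of Lemma 4.** If `ν = d`, there is a constant `C > 0` depending only on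
`d` such that for every `T ≥ 2` and points `z_1, …, z_T` in the ball of diameter 1,
`V_d(z_1,…,z_T) ≤ C · log T`. -/
theorem V_le_of_nu_eq_d
    (d : ℕ) (hd : 0 < d) (ν : ℝ) (hν : ν = (d : ℝ)) :
    ∃ C : ℝ, 0 < C ∧ ∀ T : ℕ, 2 ≤ T → ∀ z : ℕ → EuclideanSpace ℝ (Fin d),
      (∀ i, 1 ≤ i → i ≤ T →
        z i ∈ closedBall (0 : EuclideanSpace ℝ (Fin d)) (1 / 2)) →
      V d ν T z ≤ C * Real.log T := by
  refine ⟨3 * 2 ^ d, by positivity, ?_⟩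
  intro T hT z hz
  set S := Finset.Icc 2 T with hS
  set r : ℕ → ℝ := fun t => sInf ((fun i => ‖z t - z i‖) '' Set.Ico 1 t) with hr
  have hbdd : ∀ t, BddBelow ((fun i => ‖z t - z i‖) '' Set.Ico 1 t) := by
    intro t
    exact ⟨0, fun x hx => by obtain ⟨i, _, rfl⟩ := hx; exact norm_nonneg _⟩
  have hmemS : ∀ t ∈ S, 2 ≤ t ∧ t ≤ T := fun t ht => Finset.mem_Icc.1 ht
  have hrle : ∀ t ∈ S, ∀ s, 1 ≤ s → s < t → r t ≤ ‖z t - z s‖ := by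
    intro t ht s hs1 hst
    exact csInf_le (hbdd t) ⟨s, ⟨hs1, hst⟩, rfl⟩
  have hr0 : ∀ t ∈ S, 0 ≤ r t := by
    intro t ht
    obtain ⟨h2, _⟩ := hmemS t ht
    refine le_csInf ⟨‖z t - z 1‖, ⟨1, ⟨le_refl 1, by omega⟩, rfl⟩⟩ ?_
    rintro x ⟨i, _, rfl⟩; exact norm_nonneg _
  have hr1 : ∀ t ∈ S, r t ≤ 1 := by
    intro t ht
    obtain ⟨h2, hTt⟩ := hmemS t ht
    have h1 : r t ≤ ‖z t - z 1‖ := hrle t ht 1 le_rfl (by omega)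
    have hzt : ‖z t‖ ≤ 1/2 := mem_closedBall_zero_iff.1 (hz t (by omega) hTt)
    have hz1 : ‖z 1‖ ≤ 1/2 := mem_closedBall_zero_iff.1 (hz 1 le_rfl (by omega))
    have := norm_sub_le (z t) (z 1)
    linarith
  -- per-term bound
  have hterm : ∀ t ∈ S, r t ^ ν ≤ 2 ^ d * (((S.filter (fun s => r t ≤ r s)).card : ℝ))⁻¹ := by
    intro t ht
    rw [hν, Real.rpow_natCast]
    have hrankpos : 0 < (S.filter (fun s => r t ≤ r s)).card :=
      Finset.card_pos.2 ⟨t, Finset.mem_filter.2 ⟨ht, le_refl _⟩⟩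
    rcases eq_or_lt_of_le (hr0 t ht) with h0 | h0
    · rw [← h0, zero_pow hd.ne']
      positivity
    · have hpack : ((S.filter (fun s => r t ≤ r s)).card : ℝ) ≤ (2 / r t) ^ d := by
        apply packing_bound d hd h0 (hr1 t ht) _ z
        · intro s hs
          obtain ⟨hs2, hsT⟩ := hmemS s (Finset.mem_filter.1 hs).1
          exact hz s (by omega) hsT
        · intro s hs s' hs' hne
          obtain ⟨hsS, hrs⟩ := Finset.mem_filter.1 hs
          obtain ⟨hs'S, hrs'⟩ := Finset.mem_filter.1 hs'
          obtain ⟨hs2, _⟩ := hmemS s hsS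
          obtain ⟨hs'2, _⟩ := hmemS s' hs'S
          rcases Nat.lt_or_ge s s' with hlt | hge
          · have := hrle s' hs'S s (by omega) hlt
            rw [norm_sub_rev]
            linarith
          · have hlt : s' < s := by omega
            have := hrle s hsS s' (by omega) hlt
            linarith
      have hrd : (0:ℝ) < r t ^ d := pow_pos h0 d
      have hrank : (0:ℝ) < ((S.filter (fun s => r t ≤ r s)).card : ℝ) := by
        exact_mod_cast hrankpos
      rw [div_pow] at hpack
      rw [le_div_iff₀ hrd] at hpack
      rw [← div_eq_mul_inv, le_div_iff₀ hrank]
      nlinarith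
  -- sum bound
  have hsum : V d ν T z ≤ 2 ^ d * ∑ k ∈ Finset.range S.card, ((k:ℝ)+1)⁻¹ := by
    rw [V]
    calc ∑ t ∈ S, r t ^ ν
        ≤ ∑ t ∈ S, 2 ^ d * (((S.filter (fun s => r t ≤ r s)).card : ℝ))⁻¹ :=
          Finset.sum_le_sum hterm
      _ = 2 ^ d * ∑ t ∈ S, (((S.filter (fun s => r t ≤ r s)).card : ℝ))⁻¹ :=
          (Finset.mul_sum _ _ _).symm
      _ ≤ 2 ^ d * ∑ k ∈ Finset.range S.card, ((k:ℝ)+1)⁻¹ := by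
          exact mul_le_mul_of_nonneg_left (sum_inv_rank_le r S.card S rfl) (by positivity)
  have hharm : ∑ k ∈ Finset.range S.card, ((k:ℝ)+1)⁻¹ = (harmonic S.card : ℝ) := by
    rw [harmonic]
    push_cast
    rfl
  have hcard : S.card = T - 1 := by
    rw [hS, Nat.card_Icc]; omega
  have hlog : (harmonic S.card : ℝ) ≤ 1 + Real.log T := by
    calc (harmonic S.card : ℝ) ≤ 1 + Real.log S.card := harmonic_le_one_add_log _
      _ ≤ 1 + Real.log T := by
          have h1 : (0:ℝ) < S.card := by
            have : (1:ℕ) ≤ S.card := by rw [hcard]; omega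
            exact_mod_cast this
          have h2 : (S.card : ℝ) ≤ T := by
            have : S.card ≤ T := by rw [hcard]; omega
            exact_mod_cast this
          linarith [Real.log_le_log h1 h2]
  have hlog2 : Real.log 2 ≤ Real.log T := by
    apply Real.log_le_log two_pos
    exact_mod_cast hT
  have hl2 : (0.6931471803 : ℝ) < Real.log 2 := Real.log_two_gt_d9
  calc V d ν T z ≤ 2 ^ d * ∑ k ∈ Finset.range S.card, ((k:ℝ)+1)⁻¹ := hsum
    _ = 2 ^ d * (harmonic S.card : ℝ) := by rw [hharm]
    _ ≤ 2 ^ d * (1 + Real.log T) := by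
        have h2d : (0:ℝ) < 2 ^ d := by positivity
        nlinarith
    _ ≤ 3 * 2 ^ d * Real.log T := by
        have h2d : (0:ℝ) < 2 ^ d := by positivity
        nlinarith
end

section
/- Let f ∈ H with ‖f‖_H ≤ B. Then for every x ∈ X, |⟨f, Φ x⟩ − μ_t(x)| ≤ B · σ_t(x). -/
open scoped RealInnerProductSpace

/-- **Lemma 2 of the paper.** Let `H` be a real Hilbert space, `Φ : X → H` a feature map,
and `f ∈ H` with `‖f‖ ≤ B`. Given observation points `x_1, …, x_n`, let `P` be the
orthogonal projection of `H` onto the closed linear span `K` of `{Φ x_1, …, Φ x_n}`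
(characterized by `P v ∈ K` and `v - P v ∈ Kᗮ`), and set `μ(x) = ⟪P f, Φ x⟫` and
`σ(x) = ‖Φ x - P (Φ x)‖`. Then `|⟪f, Φ x⟫ - μ(x)| ≤ B · σ(x)` for every `x`. -/
theorem abs_sub_predictive_mean_le
    {H : Type*} [NormedAddCommGroup H] [InnerProductSpace ℝ H] [CompleteSpace H]
    {X : Type*} (Φ : X → H) (n : ℕ) (obs : Fin n → X)
    (K : Submodule ℝ H)
    (hK : K = (Submodule.span ℝ (Set.range fun i => Φ (obs i))).topologicalClosure)
    (P : H →ₗ[ℝ] H) (hPmem : ∀ v, P v ∈ K) (hPorth : ∀ v, v - P v ∈ Kᗮ)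
    (f : H) (B : ℝ) (hf : ‖f‖ ≤ B) (x : X) :
    |⟪f, Φ x⟫ - ⟪P f, Φ x⟫| ≤ B * ‖Φ x - P (Φ x)‖ := by
  have h1 : ⟪f, Φ x⟫ - ⟪P f, Φ x⟫ = ⟪f - P f, Φ x - P (Φ x)⟫ := by
    have h2 : ⟪f - P f, P (Φ x)⟫ = 0 := by rw [real_inner_comm]; exact (hPorth f) (P (Φ x)) (hPmem (Φ x))
    rw [inner_sub_right, h2, inner_sub_left]
    ring
  rw [h1]
  have hB : ‖f - P f‖ ≤ B := by
    refine le_trans ?_ hf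
    have hpyth : ‖f‖ ^ 2 = ‖f - P f‖ ^ 2 + ‖P f‖ ^ 2 := by
      have h2 : ⟪f - P f, P f⟫ = 0 := by rw [real_inner_comm]; exact (hPorth f) (P f) (hPmem f)
      have := norm_add_sq_real (f - P f) (P f)
      simp [h2] at this
      linarith
    nlinarith [norm_nonneg (P f), norm_nonneg (f - P f), norm_nonneg f]
  calc |⟪f - P f, Φ x - P (Φ x)⟫| ≤ ‖f - P f‖ * ‖Φ x - P (Φ x)‖ :=
        abs_real_inner_le_norm _ _
    _ ≤ B * ‖Φ x - P (Φ x)‖ := by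
        exact mul_le_mul_of_nonneg_right hB (norm_nonneg _)
end

section
/- Let B ≥ 0 and f ∈ H with ‖f‖_H ≤ B. Suppose x_t ∈ X satisfies μ_t(x_t) + B σ_t(x_t) ≥ μ_t(x) + B σ_t(x) for all x ∈ X (i.e. x_t maximizes the upper confidence bound). Then for every x ∈ X, ⟨f, Φ x⟩ − ⟨f, Φ x_t⟩ ≤ 2 B σ_t(x_t). -/
open scoped RealInnerProductSpace

/-- **Per-step GP-UCB regret inequality (proof of Theorem 1).** With `μ(x) = ⟪P f, Φ x⟫`
and `σ(x) = ‖Φ x - P (Φ x)‖` for the orthogonal projection `P` onto the closed linear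
span `K` of the features at the observation points, if `‖f‖ ≤ B` and `x_t` maximizes
the UCB `μ(x) + B σ(x)` over `X`, then `⟪f, Φ x⟫ - ⟪f, Φ x_t⟫ ≤ 2 B σ(x_t)` for all `x`. -/
theorem ucb_step_regret_le
    {H : Type*} [NormedAddCommGroup H] [InnerProductSpace ℝ H] [CompleteSpace H]
    {X : Type*} (Φ : X → H) (n : ℕ) (obs : Fin n → X)
    (K : Submodule ℝ H)
    (hK : K = (Submodule.span ℝ (Set.range fun i => Φ (obs i))).topologicalClosure)
    (P : H →ₗ[ℝ] H) (hPmem : ∀ v, P v ∈ K) (hPorth : ∀ v, v - P v ∈ Kᗮ)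
    (B : ℝ) (hB : 0 ≤ B) (f : H) (hf : ‖f‖ ≤ B)
    (xt : X)
    (hopt : ∀ x : X, ⟪P f, Φ x⟫ + B * ‖Φ x - P (Φ x)‖ ≤
      ⟪P f, Φ xt⟫ + B * ‖Φ xt - P (Φ xt)‖) :
    ∀ x : X, ⟪f, Φ x⟫ - ⟪f, Φ xt⟫ ≤ 2 * B * ‖Φ xt - P (Φ xt)‖ := by
  -- ‖f - P f‖ ≤ ‖f‖ by Pythagoras
  have hfo : ⟪f - P f, P f⟫ = 0 := real_inner_comm (P f) (f - P f) ▸ (hPorth f) (P f) (hPmem f)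
  have hnorm : ‖f - P f‖ ≤ ‖f‖ := by
    have h2 : ‖f‖ ^ 2 = ‖f - P f‖ ^ 2 + ‖P f‖ ^ 2 := by
      have := norm_add_sq_real (f - P f) (P f)
      simpa [hfo] using this
    nlinarith [sq_nonneg ‖P f‖, norm_nonneg (f - P f), norm_nonneg f]
  -- prediction error bound
  have key : ∀ x : X, |⟪f, Φ x⟫ - ⟪P f, Φ x⟫| ≤ B * ‖Φ x - P (Φ x)‖ := by
    intro x
    have h1 : ⟪f, Φ x⟫ - ⟪P f, Φ x⟫ = ⟪f - P f, Φ x - P (Φ x)⟫ := by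
      have hz : ⟪f - P f, P (Φ x)⟫ = 0 := real_inner_comm (P (Φ x)) (f - P f) ▸ (hPorth f) (P (Φ x)) (hPmem (Φ x))
      have : ⟪f - P f, Φ x - P (Φ x)⟫ = ⟪f - P f, Φ x⟫ - ⟪f - P f, P (Φ x)⟫ :=
        inner_sub_right _ _ _
      rw [this, hz, inner_sub_left]
      ring
    rw [h1]
    calc |⟪f - P f, Φ x - P (Φ x)⟫| ≤ ‖f - P f‖ * ‖Φ x - P (Φ x)‖ :=
          abs_real_inner_le_norm _ _
      _ ≤ B * ‖Φ x - P (Φ x)‖ := by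
          exact mul_le_mul_of_nonneg_right (hnorm.trans hf) (norm_nonneg _)
  intro x
  have h1 : ⟪f, Φ x⟫ ≤ ⟪P f, Φ x⟫ + B * ‖Φ x - P (Φ x)‖ := by
    have := abs_le.mp (key x)
    linarith [this.2]
  have h2 := hopt x
  have h3 : ⟪P f, Φ xt⟫ ≤ ⟪f, Φ xt⟫ + B * ‖Φ xt - P (Φ xt)‖ := by
    have := abs_le.mp (key xt)
    linarith [this.1]
  linarith
end

section
/- Let B ≥ 0 and f ∈ H with ‖f‖_H ≤ B. Let x_1, x_2, …, x_T ∈ X be a sequence such that for each t = 1, …, T, the point x_t maximizes the function x ↦ μ_t(x) + B σ_t(x) over X, where μ_t and σ_t are defined via the orthogonal projection P_t onto the closed span of {Φ x_1, …, Φ x_{t−1}} (so μ_1 ≡ 0 and σ_1(x) = ‖Φ x‖). Then for every x* ∈ X, Σ_{t=1}^T (⟨f, Φ x*⟩ − ⟨f, Φ x_t⟩) ≤ 2 B Σ_{t=1}^T σ_t(x_t). -/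
open scoped RealInnerProductSpace

/-- **Cumulative GP-UCB regret bound (equation (17) of the paper).** Let `H` be a real
Hilbert space, `Φ : X → H` a feature map, and `f ∈ H` with `‖f‖ ≤ B`. Let
`x_1, …, x_T` be a sequence of actions and, for each `t`, let `P t` be the orthogonal
projection of `H` onto the closed linear span of `{Φ (x s) : 1 ≤ s < t}` (so `P 1 = 0`),
with `μ_t(x) = ⟪P t f, Φ x⟫` and `σ_t(x) = ‖Φ x - P t (Φ x)‖`. If each `x_t` maximizes
the UCB `μ_t(x) + B σ_t(x)` over `X`, then for every `x*`,
`Σ_{t=1}^T (⟪f, Φ x*⟫ - ⟪f, Φ (x t)⟫) ≤ 2 B Σ_{t=1}^T σ_t(x_t)`. -/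
theorem ucb_cumulative_regret_le
    {H : Type*} [NormedAddCommGroup H] [InnerProductSpace ℝ H] [CompleteSpace H]
    {X : Type*} (Φ : X → H) (T : ℕ)
    (B : ℝ) (hB : 0 ≤ B) (f : H) (hf : ‖f‖ ≤ B)
    (x : ℕ → X) (P : ℕ → H →ₗ[ℝ] H)
    (hPmem : ∀ t, 1 ≤ t → t ≤ T → ∀ v, P t v ∈
      (Submodule.span ℝ ((fun s => Φ (x s)) '' Set.Ico 1 t)).topologicalClosure)
    (hPorth : ∀ t, 1 ≤ t → t ≤ T → ∀ v, v - P t v ∈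
      ((Submodule.span ℝ ((fun s => Φ (x s)) '' Set.Ico 1 t)).topologicalClosure)ᗮ)
    (hopt : ∀ t, 1 ≤ t → t ≤ T → ∀ y : X,
      ⟪P t f, Φ y⟫ + B * ‖Φ y - P t (Φ y)‖ ≤
        ⟪P t f, Φ (x t)⟫ + B * ‖Φ (x t) - P t (Φ (x t))‖) :
    ∀ xstar : X,
      ∑ t ∈ Finset.Icc 1 T, (⟪f, Φ xstar⟫ - ⟪f, Φ (x t)⟫) ≤
        2 * B * ∑ t ∈ Finset.Icc 1 T, ‖Φ (x t) - P t (Φ (x t))‖ := by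
  intro xstar
  rw [Finset.mul_sum]
  apply Finset.sum_le_sum
  intro t ht
  rw [Finset.mem_Icc] at ht
  obtain ⟨ht1, ht2⟩ := ht
  set S := (Submodule.span ℝ ((fun s => Φ (x s)) '' Set.Ico 1 t)).topologicalClosure
  -- ‖f - P t f‖ ≤ B
  have horthf : ⟪P t f, f - P t f⟫ = 0 :=
    hPorth t ht1 ht2 f (P t f) (hPmem t ht1 ht2 f)
  have hres : ‖f - P t f‖ ≤ B := by
    have h1 : ‖f‖ ^ 2 = ‖P t f‖ ^ 2 + ‖f - P t f‖ ^ 2 := by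
      have := norm_add_sq_real (P t f) (f - P t f)
      simpa [horthf] using this
    nlinarith [sq_nonneg ‖P t f‖, norm_nonneg (f - P t f), norm_nonneg f]
  -- key decomposition for any y
  have key : ∀ y : X, ⟪f, Φ y⟫ - ⟪P t f, Φ y⟫ = ⟪f - P t f, Φ y - P t (Φ y)⟫ := by
    intro y
    have h0 : ⟪f - P t f, P t (Φ y)⟫ = 0 := by
      rw [real_inner_comm]
      exact (hPorth t ht1 ht2 f) (P t (Φ y)) (hPmem t ht1 ht2 (Φ y))
    rw [inner_sub_right, h0, sub_zero, inner_sub_left]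
  have bound : ∀ y : X, |⟪f, Φ y⟫ - ⟪P t f, Φ y⟫| ≤ B * ‖Φ y - P t (Φ y)‖ := by
    intro y
    rw [key y]
    calc |⟪f - P t f, Φ y - P t (Φ y)⟫| ≤ ‖f - P t f‖ * ‖Φ y - P t (Φ y)‖ :=
          abs_real_inner_le_norm _ _
      _ ≤ B * ‖Φ y - P t (Φ y)‖ := by
          exact mul_le_mul_of_nonneg_right hres (norm_nonneg _)
  have h1 := abs_le.mp (bound xstar)
  have h2 := abs_le.mp (bound (x t))
  have h3 := hopt t ht1 ht2 xstar
  nlinarith [norm_nonneg (Φ xstar - P t (Φ xstar)), mul_nonneg hB (norm_nonneg (Φ xstar - P t (Φ xstar)))]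
end

section
/- Let X be a real random variable whose law is the Gaussian measure N(m, s²) with mean m ∈ ℝ and standard deviation s > 0, and let y ∈ ℝ satisfy y − m ≤ s. Then P(X > y) ≥ 1/(4√π · e). -/
open MeasureTheory ProbabilityTheory

lemma sqrt_two_mul_exp_one_le_four : Real.sqrt 2 * Real.exp 1 ≤ 4 := by
  have h1 : Real.sqrt 2 ≤ 1.4143 := by
    rw [show (1.4143 : ℝ) = Real.sqrt (1.4143 ^ 2) by
      rw [Real.sqrt_sq (by norm_num)]]
    exact Real.sqrt_le_sqrt (by norm_num)
  have h2 : Real.exp 1 ≤ 2.7182818286 := le_of_lt Real.exp_one_lt_d9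
  have h3 : (0:ℝ) < Real.exp 1 := Real.exp_pos 1
  nlinarith [Real.sqrt_nonneg 2]

lemma key_real_ineq : 1 / (4 * Real.sqrt Real.pi * Real.exp 1)
    ≤ (Real.sqrt (2 * Real.pi))⁻¹ * Real.exp (-2) := by
  have hπ : (0:ℝ) < Real.sqrt Real.pi := Real.sqrt_pos.mpr Real.pi_pos
  have h2π : Real.sqrt (2 * Real.pi) = Real.sqrt 2 * Real.sqrt Real.pi :=
    Real.sqrt_mul (by norm_num) _
  have he : Real.exp (-2) = (Real.exp 1 * Real.exp 1)⁻¹ := by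
    rw [← Real.exp_add, ← Real.exp_neg]; norm_num
  have h2 : (0:ℝ) < Real.sqrt 2 := Real.sqrt_pos.mpr (by norm_num)
  have he1 : (0:ℝ) < Real.exp 1 := Real.exp_pos 1
  have key := sqrt_two_mul_exp_one_le_four
  rw [h2π, he, ← mul_inv, ← one_div,
    div_le_div_iff₀ (by positivity) (by positivity)]
  nlinarith [mul_le_mul_of_nonneg_right key (mul_pos hπ he1).le]

/-- **Gaussian anti-concentration (proof of Lemma 6 of the paper).** If `X` has Gaussian
law `N(m, s²)` with `s > 0`, and `y - m ≤ s`, then `P(X > y) ≥ 1/(4 √π e)`. -/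
theorem gaussian_anti_concentration
    {Ω : Type*} [MeasurableSpace Ω] (P : Measure Ω) [IsProbabilityMeasure P]
    (X : Ω → ℝ) (m : ℝ) (s : NNReal) (hs : 0 < s)
    (hlaw : P.map X = gaussianReal m (s ^ 2))
    (y : ℝ) (hy : y - m ≤ (s : ℝ)) :
    ENNReal.ofReal (1 / (4 * Real.sqrt Real.pi * Real.exp 1)) ≤ P {ω | y < X ω} := by
  have hsR : (0:ℝ) < (s:ℝ) := hs
  have hv : (s^2 : NNReal) ≠ 0 := pow_ne_zero 2 hs.ne'
  have hX : AEMeasurable X P := by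
    by_contra h
    rw [Measure.map_of_not_aemeasurable h] at hlaw
    have h1 := measure_univ (μ := gaussianReal m (s^2))
    rw [← hlaw] at h1
    simp at h1
  have hmap : P {ω | y < X ω} = gaussianReal m (s^2) (Set.Ioi y) := by
    rw [← hlaw, Measure.map_apply_of_aemeasurable hX measurableSet_Ioi]
    rfl
  rw [hmap, gaussianReal_apply m hv]
  have hsub : Set.Ioc (m + s) (m + 2*s) ⊆ Set.Ioi y := by
    intro x hx
    have := hx.1
    simp only [Set.mem_Ioi]
    linarith
  set c : ENNReal := ENNReal.ofReal ((Real.sqrt (2*Real.pi))⁻¹ * (s:ℝ)⁻¹ * Real.exp (-2))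
  have hc : ∀ x ∈ Set.Ioc (m + (s:ℝ)) (m + 2*(s:ℝ)), c ≤ gaussianPDF m (s^2) x := by
    intro x hx
    apply ENNReal.ofReal_le_ofReal
    rw [gaussianPDFReal]
    have h1 : Real.sqrt (2 * Real.pi * ((s^2 : NNReal) : ℝ)) = Real.sqrt (2*Real.pi) * s := by
      push_cast
      rw [Real.sqrt_mul (by positivity), Real.sqrt_sq hsR.le]
    rw [h1, mul_inv]
    have hexp : Real.exp (-2) ≤ Real.exp (-(x-m)^2/(2*((s^2 : NNReal) : ℝ))) := by
      apply Real.exp_le_exp.mpr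
      push_cast
      rw [neg_div, neg_le_neg_iff, div_le_iff₀ (by positivity)]
      have hxm1 : (s:ℝ) < x - m := by linarith [hx.1]
      have hxm2 : x - m ≤ 2*(s:ℝ) := by linarith [hx.2]
      nlinarith
    have hpos : (0:ℝ) ≤ (Real.sqrt (2*Real.pi))⁻¹ * (s:ℝ)⁻¹ := by positivity
    calc (Real.sqrt (2*Real.pi))⁻¹ * (s:ℝ)⁻¹ * Real.exp (-2)
        ≤ (Real.sqrt (2*Real.pi))⁻¹ * (s:ℝ)⁻¹ * Real.exp (-(x-m)^2/(2*((s^2 : NNReal) : ℝ))) :=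
          mul_le_mul_of_nonneg_left hexp hpos
      _ = _ := by ring
  calc ENNReal.ofReal (1 / (4 * Real.sqrt Real.pi * Real.exp 1))
      ≤ ENNReal.ofReal ((Real.sqrt (2*Real.pi))⁻¹ * Real.exp (-2)) :=
        ENNReal.ofReal_le_ofReal key_real_ineq
    _ = c * ENNReal.ofReal (s:ℝ) := by
        rw [← ENNReal.ofReal_mul (by positivity)]
        congr 1
        field_simp
    _ = c * volume (Set.Ioc (m + (s:ℝ)) (m + 2*(s:ℝ))) := by
        rw [Real.volume_Ioc]
        congr 1
        ring_nf
    _ = ∫⁻ _ in Set.Ioc (m + (s:ℝ)) (m + 2*(s:ℝ)), c := (setLIntegral_const _ _).symm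
    _ ≤ ∫⁻ x in Set.Ioc (m + (s:ℝ)) (m + 2*(s:ℝ)), gaussianPDF m (s^2) x :=
        setLIntegral_mono (measurable_gaussianPDF _ _) hc
    _ ≤ ∫⁻ x in Set.Ioi y, gaussianPDF m (s^2) x :=
        lintegral_mono_set hsub
end
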